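/- Let G be a connected graph on n vertices with exactly k pendant vertices, where 2 ≤ k ≤ n−3. Then ε(G) ≤ ⌊(3n² − k² − 2nk + 2(n+k))/4⌋, and for every 1 ≤ l ≤ k−1 the tree T(l, k−l, n−k) attains this bound, i.e., ε(T(l, k−l, n−k)) = ⌊(3n² − k² − 2nk + 2(n+k))/4⌋. -/

import Mathlib

open SimpleGraph

/-- The eccentricity of a vertex: maximum distance to any vertex. -/
noncomputable def ecc {V : Type*} (G : SimpleGraph V) (v : V) : ℕ :=
  ⨆ u, G.dist v u

/-- The total eccentricity index: sum of eccentricities of all vertices. -/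
noncomputable def totalEcc {V : Type*} [Fintype V] (G : SimpleGraph V) : ℕ :=
  ∑ v, ecc G v

/-- A pendant vertex: a vertex of degree one, i.e. with exactly one neighbour. -/
def IsPendant {V : Type*} (G : SimpleGraph V) (v : V) : Prop :=
  ∃! u, G.Adj v u

/-- A cut vertex: a vertex whose removal disconnects the graph. -/
def IsCutVertex {V : Type*} (G : SimpleGraph V) (w : V) : Prop :=
  ¬ (G.induce {v | v ≠ w}).Connected

/-- distance between two subgraphs -/
noncomputable def subgraphDist {V : Type*} (G : SimpleGraph V) (B B' : G.Subgraph) : ℕ :=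
  sInf {d | ∃ u ∈ B.verts, ∃ w ∈ B'.verts, G.dist u w = d}

/-- A 2-connected subgraph: at least two vertices, connected, and no cut vertex. -/
def TwoConn {V : Type*} {G : SimpleGraph V} (H : G.Subgraph) : Prop :=
  2 ≤ H.verts.ncard ∧ H.coe.Connected ∧ ∀ w, ¬ IsCutVertex H.coe w

/-- A block: a maximal 2-connected subgraph. -/
def IsBlock {V : Type*} {G : SimpleGraph V} (H : G.Subgraph) : Prop :=
  TwoConn H ∧ ∀ H' : G.Subgraph, H ≤ H' → TwoConn H' → H' = H

/-- A pendant block: a block containing exactly one cut vertex of `G`. -/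
def IsPendantBlock {V : Type*} (G : SimpleGraph V) (H : G.Subgraph) : Prop :=
  ∃! w, w ∈ H.verts ∧ IsCutVertex G w

/-- `G_{k,l}`: the graph obtained from `G` by attaching two new paths,
with `k` resp. `l` new vertices, at the vertex `v`. -/
def attachTwoPaths {V : Type*} (G : SimpleGraph V) (v : V) (k l : ℕ) :
    SimpleGraph (V ⊕ (Fin k ⊕ Fin l)) :=
  SimpleGraph.fromRel (fun p q =>
    match p, q with
    | .inl x, .inl y => G.Adj x y
    | .inl x, .inr (.inl i) => x = v ∧ i.val = 0
    | .inl x, .inr (.inr i) => x = v ∧ i.val = 0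
    | .inr (.inl i), .inr (.inl j) => i.val + 1 = j.val
    | .inr (.inr i), .inr (.inr j) => i.val + 1 = j.val
    | _, _ => False)

/-- The graph obtained from `H1`, `H2` and the path `P_d = v_1 v_2 … v_d` by identifying
`u ∈ V(H1)`, `v ∈ V(H2)` and `v_1` into a single vertex.  The `Fin (d-1)` part records the
path vertices `v_2, …, v_d`. -/
def glueMid {V1 V2 : Type*} (H1 : SimpleGraph V1) (H2 : SimpleGraph V2)
    (u : V1) (v : V2) (d : ℕ) :
    SimpleGraph (V1 ⊕ ({x : V2 // x ≠ v} ⊕ Fin (d - 1))) :=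
  SimpleGraph.fromRel (fun p q =>
    match p, q with
    | .inl x, .inl y => H1.Adj x y
    | .inl x, .inr (.inl y) => x = u ∧ H2.Adj v y.1
    | .inl x, .inr (.inr i) => x = u ∧ i.val = 0
    | .inr (.inl x), .inr (.inl y) => H2.Adj x.1 y.1
    | .inr (.inr i), .inr (.inr j) => i.val + 1 = j.val
    | _, _ => False)

/-- The graph obtained from `H1`, `H2` and the path `P_d = v_1 v_2 … v_d` by identifying
`u ∈ V(H1)` with `v_1` and `v ∈ V(H2)` with `v_d`.  The `Fin (d-1)` part records the path
vertices `v_2, …, v_d` (the last one being identified with `v`). -/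
def glueEnds {V1 V2 : Type*} (H1 : SimpleGraph V1) (H2 : SimpleGraph V2)
    (u : V1) (v : V2) (d : ℕ) :
    SimpleGraph (V1 ⊕ ({x : V2 // x ≠ v} ⊕ Fin (d - 1))) :=
  SimpleGraph.fromRel (fun p q =>
    match p, q with
    | .inl x, .inl y => H1.Adj x y
    | .inl x, .inr (.inr i) => x = u ∧ i.val = 0
    | .inr (.inl x), .inr (.inl y) => H2.Adj x.1 y.1
    | .inr (.inr i), .inr (.inl y) => i.val + 1 = d - 1 ∧ H2.Adj v y.1
    | .inr (.inr i), .inr (.inr j) => i.val + 1 = j.val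
    | _, _ => False)

/-- `U_{n,g}^l`: the unicyclic graph on `n` vertices obtained by joining one end vertex of
the path `P_{n-g}` to a vertex of the cycle `C_g` by an edge. -/
def UnlGraph (n g : ℕ) : SimpleGraph (Fin (n - g) ⊕ Fin g) :=
  SimpleGraph.fromRel (fun p q =>
    match p, q with
    | .inl i, .inl j => i.val + 1 = j.val
    | .inl i, .inr j => i.val + 1 = n - g ∧ j.val = 0
    | .inr i, .inr j => i.val + 1 = j.val ∨ (i.val = 0 ∧ j.val + 1 = g)
    | _, _ => False)

/-- `U_{n,g}^p`: the unicyclic graph on `n` vertices obtained by attaching `n - g` pendant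
vertices to one vertex of the cycle `C_g`. -/
def UnpGraph (n g : ℕ) : SimpleGraph (Fin g ⊕ Fin (n - g)) :=
  SimpleGraph.fromRel (fun p q =>
    match p, q with
    | .inl i, .inl j => i.val + 1 = j.val ∨ (i.val = 0 ∧ j.val + 1 = g)
    | .inl i, .inr _ => i.val = 0
    | _, _ => False)

/-- The graph obtained by joining the vertex `u` of `H` to the pendant vertex of
`U_{r,g}^l` by an edge. -/
def joinPendant {V : Type*} (H : SimpleGraph V) (u : V) (r g : ℕ) :
    SimpleGraph (V ⊕ (Fin (r - g) ⊕ Fin g)) :=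
  SimpleGraph.fromRel (fun p q =>
    match p, q with
    | .inl x, .inl y => H.Adj x y
    | .inl x, .inr (.inl i) => x = u ∧ i.val = 0
    | .inr a, .inr b => (UnlGraph r g).Adj a b
    | _, _ => False)

/-- `C_{m1,m2}^n` in the case `n = m1 + m2 - 1`: two cycles `C_{m1}` and `C_{m2}`
sharing exactly one vertex (the vertex `0`). -/
def twoCyclesGlued (m1 m2 : ℕ) : SimpleGraph (Fin (m1 + m2 - 1)) :=
  SimpleGraph.fromRel (fun i j =>
    (i.val + 1 = j.val ∧ j.val < m1) ∨ (i.val = 0 ∧ j.val + 1 = m1)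
    ∨ (i.val = 0 ∧ j.val = m1) ∨ (m1 ≤ i.val ∧ i.val + 1 = j.val)
    ∨ (i.val = 0 ∧ j.val + 2 = m1 + m2))

/-- `C_{3,3}^n` for `n > 5`: two triangles `{0,1,2}` and `{n-3,n-2,n-1}` joined by the path
`2, 3, …, n-3` (a path on `n - 4` vertices whose ends are identified with a vertex of each
triangle). -/
def C33 (n : ℕ) : SimpleGraph (Fin n) :=
  SimpleGraph.fromRel (fun i j =>
    (i.val = 0 ∧ j.val = 1) ∨ (i.val = 0 ∧ j.val = 2) ∨ (i.val = 1 ∧ j.val = 2)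
    ∨ (2 ≤ i.val ∧ i.val + 1 = j.val ∧ j.val + 3 ≤ n)
    ∨ (i.val + 3 = n ∧ j.val + 2 = n) ∨ (i.val + 2 = n ∧ j.val + 1 = n)
    ∨ (i.val + 3 = n ∧ j.val + 1 = n))

/-- `T(l, m, d)`: the tree obtained from the path `P_d` by attaching `l` pendant vertices at
one end and `m` pendant vertices at the other end. -/
def Tlmd (l m d : ℕ) : SimpleGraph (Fin d ⊕ (Fin l ⊕ Fin m)) :=
  SimpleGraph.fromRel (fun p q =>
    match p, q with
    | .inl i, .inl j => i.val + 1 = j.val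
    | .inl i, .inr (.inl _) => i.val = 0
    | .inl i, .inr (.inr _) => i.val + 1 = d
    | _, _ => False)

/-- `K_m^n(l_1, …, l_m)`: the graph obtained from the complete graph `K_m` by identifying,
for each `i`, one end vertex of a path on `l i` vertices with the `i`-th vertex of `K_m`.
The vertex `⟨i, 0⟩` is the `i`-th vertex of the complete graph. -/
def Kmn (m : ℕ) (l : Fin m → ℕ) : SimpleGraph ((i : Fin m) × Fin (l i)) :=
  SimpleGraph.fromRel (fun p q =>
    (p.1 = q.1 ∧ p.2.val + 1 = q.2.val) ∨ (p.1 ≠ q.1 ∧ p.2.val = 0 ∧ q.2.val = 0))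

/-- The graph obtained from `H`, `C_{m1}` and `C_{m2}` by identifying the vertex `w` of `H`,
a vertex of `C_{m1}` and a vertex of `C_{m2}` into one vertex. -/
def glueTwoCycles {V : Type*} (H : SimpleGraph V) (w : V) (m1 m2 : ℕ) :
    SimpleGraph (V ⊕ (Fin (m1 - 1) ⊕ Fin (m2 - 1))) :=
  SimpleGraph.fromRel (fun p q =>
    match p, q with
    | .inl x, .inl y => H.Adj x y
    | .inl x, .inr (.inl i) => x = w ∧ (i.val = 0 ∨ i.val + 2 = m1)
    | .inl x, .inr (.inr i) => x = w ∧ (i.val = 0 ∨ i.val + 2 = m2)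
    | .inr (.inl i), .inr (.inl j) => i.val + 1 = j.val
    | .inr (.inr i), .inr (.inr j) => i.val + 1 = j.val
    | _, _ => False)

/-- The graph obtained from `H` and the cycle `C_M` by identifying the vertex `w` of `H`
with one vertex of the cycle. -/
def glueOneCycle {V : Type*} (H : SimpleGraph V) (w : V) (M : ℕ) :
    SimpleGraph (V ⊕ Fin (M - 1)) :=
  SimpleGraph.fromRel (fun p q =>
    match p, q with
    | .inl x, .inl y => H.Adj x y
    | .inl x, .inr i => x = w ∧ (i.val = 0 ∨ i.val + 2 = M)
    | .inr i, .inr j => i.val + 1 = j.val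
    | _, _ => False)


/-!
Pass to a spanning tree `T` of `G`: eccentricities can only grow, and pendant vertices of `G`
stay pendant in `T`. Let `x = v₀, …, v_d = y` be a diametral path of `T`. By the median property
of trees, `ecc vᵢ ≤ max i (d - i)`, every other vertex has eccentricity at most `d`, and no
pendant vertex other than `x, y` lies on the path, so `k + d ≤ n + 1`. Summing,
`4 ε(T) ≤ 3d² + 4d + (d mod 2) + 4 (n - d - 1) d`, which is largest for `d = n - k + 1`, where
it is the bound. In `T(l, m, d)` a vertex at position `j` of a leaf-to-leaf path of length
`d + 1` has eccentricity `max j (d + 1 - j)`, and summing these gives the bound exactly.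
-/

def eccBound (n k : ℕ) : ℕ := (3 * n ^ 2 - k ^ 2 - 2 * n * k + 2 * (n + k)) / 4

lemma le_eccBound {n k d e : ℕ}
    (he : 4 * e ≤ 3 * d ^ 2 + 4 * d + d % 2 + 4 * ((n - (d + 1)) * d))
    (hdn : d < n) (hkd : k + d ≤ n + 1) : e ≤ eccBound n k := by
  have key : 4 * e + k ^ 2 + 2 * (n * k) ≤ 3 * n ^ 2 + 2 * (n + k) := by
    obtain ⟨m, rfl⟩ : ∃ m, n = d + 1 + m := ⟨n - (d + 1), by omega⟩
    rw [show d + 1 + m - (d + 1) = m by omega] at he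
    have hk : k ≤ m + 2 := by omega
    have : d % 2 ≤ 1 := by omega
    nlinarith [Nat.mul_le_mul_right (3 * m + 2 * d + k + 2) hk]
  unfold eccBound
  rw [Nat.le_div_iff_mul_le four_pos, show 2 * n * k = 2 * (n * k) by ring]
  omega

lemma four_mul_sum_range_max_sub (d : ℕ) :
    4 * ∑ i ∈ Finset.range (d + 1), max i (d - i) = 3 * d ^ 2 + 4 * d + d % 2 := by
  induction d using Nat.twoStepInduction with
  | zero => simp
  | one => decide
  | more d ih _ =>
    have hstep : ∑ i ∈ Finset.range (d + 2 + 1), max i (d + 2 - i)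
        = ∑ i ∈ Finset.range (d + 1), max i (d - i) + (3 * d + 5) := by
      rw [Finset.sum_range_succ', Finset.sum_range_succ]
      have hshift : ∀ i ∈ Finset.range (d + 1),
          max (i + 1) (d + 2 - (i + 1)) = max i (d - i) + 1 :=
        fun i hi => by rw [Finset.mem_range] at hi; omega
      rw [Finset.sum_congr rfl hshift, Finset.sum_add_distrib]
      simp
      omega
    rw [hstep, mul_add, ih, show (d + 2) % 2 = d % 2 by omega]
    ring

section Eccentricity

variable {V : Type*} {G G' : SimpleGraph V}

lemma ecc_le_of_forall_dist_le {v : V} {r : ℕ} (h : ∀ u, G.dist v u ≤ r) : ecc G v ≤ r :=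
  have : Nonempty V := ⟨v⟩
  ciSup_le h

lemma dist_le_ecc [Finite V] (v u : V) : G.dist v u ≤ ecc G v :=
  le_ciSup (Set.finite_range _).bddAbove u

lemma ecc_anti [Finite V] (hle : G ≤ G') (hG : G.Connected) (v : V) : ecc G' v ≤ ecc G v :=
  ecc_le_of_forall_dist_le fun u => ((hG v u).dist_anti hle).trans (dist_le_ecc v u)

lemma totalEcc_anti [Fintype V] (hle : G ≤ G') (hG : G.Connected) :
    totalEcc G' ≤ totalEcc G :=
  Finset.sum_le_sum fun v _ => ecc_anti hle hG v

end Eccentricity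

namespace SimpleGraph

variable {V : Type*} {G : SimpleGraph V} {u v w x y : V}

lemma Walk.dist_add_dist_of_length_eq_dist {p : G.Walk u v} (hp : p.length = G.dist u v)
    (hw : w ∈ p.support) : G.dist u w + G.dist w v = G.dist u v := by
  classical
  have htake := dist_le (p.takeUntil w hw)
  have hdrop := dist_le (p.dropUntil w hw)
  have hsplit : (p.takeUntil w hw).length + (p.dropUntil w hw).length = p.length := by
    rw [← Walk.length_append, Walk.take_spec]
  have := (p.takeUntil w hw).reachable.dist_triangle_left v
  omega

lemma Walk.dist_getVert_of_length_eq_dist {p : G.Walk u v} (hp : p.length = G.dist u v)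
    {i : ℕ} (hi : i ≤ p.length) : G.dist u (p.getVert i) = i := by
  have hsplit := dist_add_dist_of_length_eq_dist hp (p.getVert_mem_support i)
  have htake := dist_le (p.take i)
  have hdrop := dist_le (p.drop i)
  rw [Walk.take_length] at htake
  rw [Walk.drop_length] at hdrop
  omega

lemma IsTree.dist_add_dist_eq_or (hT : G.IsTree) {P : G.Walk x y} (hP : P.IsPath)
    (hv : v ∈ P.support) (z : V) :
    G.dist z v + G.dist v x = G.dist z x ∨ G.dist z v + G.dist v y = G.dist z y := by
  classical
  obtain ⟨Q, -, hQ⟩ := hT.connected.exists_path_of_dist z x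
  obtain ⟨R, -, hR⟩ := hT.connected.exists_path_of_dist z y
  by_cases hvQ : v ∈ Q.support
  · exact .inl (Walk.dist_add_dist_of_length_eq_dist hQ hvQ)
  by_cases hvR : v ∈ R.support
  · exact .inr (Walk.dist_add_dist_of_length_eq_dist hR hvR)
  -- otherwise `Q⁻¹ R` contains a path from `x` to `y` avoiding `v`, contradicting uniqueness
  have hbypass : (Q.reverse.append R).bypass = P := congrArg Subtype.val <|
    (hT.isAcyclic.subsingleton_path x y).elim ⟨_, Walk.bypass_isPath _⟩ ⟨P, hP⟩
  have := (Q.reverse.append R).support_bypass_subset_support (hbypass ▸ hv)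
  simp [Walk.mem_support_append_iff, hvQ, hvR] at this

lemma exists_walk_length_eq_sub (f : ℕ → V) {i j : ℕ} (hij : i ≤ j)
    (hf : ∀ t, i ≤ t → t < j → G.Adj (f t) (f (t + 1))) :
    ∃ p : G.Walk (f i) (f j), p.length = j - i := by
  induction j, hij using Nat.le_induction with
  | base => exact ⟨.nil, by simp⟩
  | succ j hij ih =>
    obtain ⟨p, hp⟩ := ih fun t h1 h2 => hf t h1 (by omega)
    exact ⟨p.concat (hf j hij (by omega)), by rw [Walk.length_concat]; omega⟩

lemma Walk.apply_le_apply_add_length (f : V → ℕ)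
    (hf : ∀ ⦃a b⦄, G.Adj a b → f b ≤ f a + 1) (p : G.Walk u v) :
    f v ≤ f u + p.length := by
  induction p with
  | nil => simp
  | cons h p ih => have := hf h; rw [Walk.length_cons]; omega

lemma Reachable.apply_le_apply_add_dist (f : V → ℕ)
    (hf : ∀ ⦃a b⦄, G.Adj a b → f b ≤ f a + 1) (h : G.Reachable u v) :
    f v ≤ f u + G.dist u v := by
  obtain ⟨p, hp⟩ := h.exists_walk_length_eq_dist
  exact hp ▸ p.apply_le_apply_add_length f hf

end SimpleGraph

section Pendant

variable {V : Type*} {G T : SimpleGraph V} {u v x y : V}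

lemma IsPendant.dist_add_one_le (hv : IsPendant G v) (hu : G.Adj v u) {z : V} (hz : v ≠ z)
    (hreach : G.Reachable v z) : G.dist u z + 1 ≤ G.dist v z := by
  obtain ⟨p, hp⟩ := hreach.exists_walk_length_eq_dist
  obtain ⟨w, hw, q, rfl⟩ := Walk.exists_eq_cons_of_ne hz p
  obtain rfl : w = u := hv.unique hw hu
  simpa [← hp] using dist_le q

lemma IsPendant.eq_or_eq_of_dist_add_dist_eq (hv : IsPendant G v) (hG : G.Connected)
    (h : G.dist x v + G.dist v y = G.dist x y) : v = x ∨ v = y := by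
  by_contra! hne
  obtain ⟨u, hu, -⟩ := id hv
  have hx := hv.dist_add_one_le hu hne.1 (hG v x)
  have hy := hv.dist_add_one_le hu hne.2 (hG v y)
  have := hG.dist_triangle (u := x) (v := u) (w := y)
  have := G.dist_comm (u := x) (v := u)
  have := G.dist_comm (u := x) (v := v)
  omega

lemma IsPendant.of_le (hv : IsPendant G v) (hle : T ≤ G) (hT : T.Connected) :
    IsPendant T v := by
  obtain ⟨u, hu, huniq⟩ := hv
  obtain ⟨w, hw, -, -⟩ := Walk.exists_eq_cons_of_ne hu.ne (hT.preconnected v u).some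
  exact ⟨w, hw, fun z hz => (huniq z (hle hz)).trans (huniq w (hle hw)).symm⟩

end Pendant

namespace SimpleGraph

open Finset

variable {V : Type*} {G T : SimpleGraph V} {x y : V}

lemma Connected.card_add_dist_le [Fintype V] (hG : G.Connected) (K : Finset V)
    (hK : ∀ v ∈ K, IsPendant G v) (x y : V) : #K + G.dist x y ≤ Fintype.card V + 1 := by
  classical
  obtain ⟨P, hP, hPd⟩ := hG.exists_path_of_dist x y
  set S := P.support.toFinset
  have hS : #S = G.dist x y + 1 := by
    rw [List.toFinset_card_of_nodup hP.support_nodup, Walk.length_support, hPd]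
  have hKS : K ∩ S ⊆ {x, y} := by
    intro v hv
    rw [mem_inter, List.mem_toFinset] at hv
    simpa using (hK v hv.1).eq_or_eq_of_dist_add_dist_eq hG
      (Walk.dist_add_dist_of_length_eq_dist hPd hv.2)
  have := card_union_add_card_inter K S
  have := (card_le_card hKS).trans card_le_two
  have := card_le_univ (K ∪ S)
  omega

lemma IsTree.ecc_le_of_mem_support (hT : T.IsTree) (hxy : ∀ u w, T.dist u w ≤ T.dist x y)
    {P : T.Walk x y} (hP : P.length = T.dist x y) {v : V} (hv : v ∈ P.support) :
    ecc T v ≤ max (T.dist x v) (T.dist v y) := by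
  have hxvy := Walk.dist_add_dist_of_length_eq_dist hP hv
  refine ecc_le_of_forall_dist_le fun z => ?_
  have := hxy z x
  have := hxy z y
  have := T.dist_comm (u := v) (v := z)
  have := T.dist_comm (u := v) (v := x)
  rcases hT.dist_add_dist_eq_or (P.isPath_of_length_eq_dist hP) hv z with h | h
  · exact le_max_of_le_right (by omega)
  · exact le_max_of_le_left (by omega)

lemma IsTree.totalEcc_le_of_diametral [Fintype V] (hT : T.IsTree)
    (hxy : ∀ u w, T.dist u w ≤ T.dist x y) :
    totalEcc T ≤ ∑ i ∈ range (T.dist x y + 1), max i (T.dist x y - i)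
      + (Fintype.card V - (T.dist x y + 1)) * T.dist x y := by
  classical
  set d := T.dist x y
  obtain ⟨P, hP, hPd⟩ := hT.connected.exists_path_of_dist x y
  have hinj : Set.InjOn P.getVert (range (d + 1)) := fun i hi j hj h =>
    hP.getVert_injOn (show i ≤ P.length by simp at hi; omega)
      (show j ≤ P.length by simp at hj; omega) h
  set S := (range (d + 1)).image P.getVert
  have hS : #S = d + 1 := by rw [card_image_of_injOn hinj, card_range]
  have hpath : ∑ v ∈ S, ecc T v ≤ ∑ i ∈ range (d + 1), max i (d - i) := by
    rw [sum_image hinj]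
    refine sum_le_sum fun i hi => ?_
    have hi : i ≤ P.length := by simp at hi; omega
    have hxv := Walk.dist_getVert_of_length_eq_dist hPd hi
    have hvy := Walk.dist_add_dist_of_length_eq_dist hPd (P.getVert_mem_support i)
    have := hT.ecc_le_of_mem_support hxy hPd (P.getVert_mem_support i)
    omega
  have hrest : ∑ v ∈ Sᶜ, ecc T v ≤ (Fintype.card V - (d + 1)) * d := by
    rw [← hS, ← card_compl, ← smul_eq_mul]
    exact sum_le_card_nsmul _ _ _ fun v _ => ecc_le_of_forall_dist_le fun u => hxy v u
  rw [totalEcc, ← sum_add_sum_compl S]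
  omega

theorem IsTree.totalEcc_le [Fintype V] (hT : T.IsTree) (K : Finset V)
    (hK : ∀ v ∈ K, IsPendant T v) : totalEcc T ≤ eccBound (Fintype.card V) #K := by
  have := hT.connected.nonempty
  obtain ⟨⟨x, y⟩, hmax⟩ := Finite.exists_max fun p : V × V => T.dist p.1 p.2
  have hxy : ∀ u w, T.dist u w ≤ T.dist x y := fun u w => hmax (u, w)
  obtain ⟨P, hP, hPd⟩ := hT.connected.exists_path_of_dist x y
  have hsum := hT.totalEcc_le_of_diametral hxy
  have hS := four_mul_sum_range_max_sub (T.dist x y)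
  exact le_eccBound (by omega) (hPd ▸ hP.length_lt)
    (hT.connected.card_add_dist_le K hK x y)

theorem Connected.totalEcc_le [Fintype V] (hG : G.Connected) :
    totalEcc G ≤ eccBound (Fintype.card V) {v | IsPendant G v}.ncard := by
  classical
  obtain ⟨T, hTG, hT⟩ := hG.exists_isTree_le
  rw [Set.ncard_eq_toFinset_card']
  refine (totalEcc_anti hTG hT.connected).trans (hT.totalEcc_le _ fun v hv => ?_)
  exact (Set.mem_toFinset.mp hv).of_le hTG hT.connected

end SimpleGraph

namespace Tlmd

variable {l m d : ℕ}

def pos : Fin d ⊕ (Fin l ⊕ Fin m) → ℕ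
  | .inl i => i + 1
  | .inr (.inl _) => 0
  | .inr (.inr _) => d + 1

lemma pos_le_add_one_of_adj {p q : Fin d ⊕ (Fin l ⊕ Fin m)} (h : (Tlmd l m d).Adj p q) :
    pos q ≤ pos p + 1 := by
  rw [Tlmd, fromRel_adj] at h
  obtain ⟨-, h | h⟩ := h <;> rcases p with i | a | b <;> rcases q with j | a' | b' <;>
    simp only [pos] at * <;> omega

/-- The path `a, 0, 1, …, d - 1, b` through the leaves `a` and `b`, indexed by `pos`. -/
def spine (a : Fin l) (b : Fin m) (j : ℕ) : Fin d ⊕ (Fin l ⊕ Fin m) :=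
  if h0 : j = 0 then .inr (.inl a)
  else if h : j ≤ d then .inl ⟨j - 1, by omega⟩ else .inr (.inr b)

section Spine

variable (a : Fin l) (b : Fin m)

@[simp] lemma spine_zero : spine (d := d) a b 0 = .inr (.inl a) := rfl

@[simp] lemma spine_val_add_one (i : Fin d) : spine a b (i + 1) = .inl i := by
  simp [spine]

@[simp] lemma spine_add_one : spine (d := d) a b (d + 1) = .inr (.inr b) := by
  simp [spine]

lemma spine_one (hd : 0 < d) : spine (l := l) (m := m) a b 1 = .inl ⟨0, hd⟩ := by
  simp [spine, Nat.one_le_iff_ne_zero.mpr hd.ne']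

lemma adj_spine (hd : 0 < d) {t : ℕ} (ht : t ≤ d) :
    (Tlmd l m d).Adj (spine a b t) (spine a b (t + 1)) := by
  rw [Tlmd, fromRel_adj]
  unfold spine
  split_ifs <;> simp <;> grind

lemma exists_walk_spine (hd : 0 < d) {i j : ℕ} (hij : i ≤ j) (hj : j ≤ d + 1) :
    ∃ p : (Tlmd l m d).Walk (spine a b i) (spine a b j), p.length = j - i :=
  exists_walk_length_eq_sub _ hij fun _ _ ht => adj_spine a b hd (by omega)

lemma dist_spine_le (hd : 0 < d) {i j : ℕ} (hi : i ≤ d + 1) (hj : j ≤ d + 1) :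
    (Tlmd l m d).dist (spine a b i) (spine a b j) ≤ (j - i) + (i - j) := by
  rcases le_total i j with h | h
  · obtain ⟨p, hp⟩ := exists_walk_spine a b hd h hj
    exact (dist_le p).trans (by omega)
  · obtain ⟨p, hp⟩ := exists_walk_spine a b hd h hi
    rw [dist_comm]
    exact (dist_le p).trans (by omega)

end Spine

lemma connected (hl : 0 < l) (hm : 0 < m) (hd : 0 < d) : (Tlmd l m d).Connected := by
  have a0 : Fin l := ⟨0, hl⟩
  have b0 : Fin m := ⟨0, hm⟩
  rw [connected_iff_exists_forall_reachable]
  refine ⟨spine a0 b0 1, fun v => ?_⟩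
  rcases v with i | a | b
  · obtain ⟨p, -⟩ := exists_walk_spine a0 b0 hd (i := 1) (j := i + 1) (by omega) (by omega)
    simpa using p.reachable
  · obtain ⟨p, -⟩ := exists_walk_spine a b0 hd (i := 0) (j := 1) (by omega) (by omega)
    simpa [spine_one a0 b0 hd, spine_one a b0 hd] using p.reachable.symm
  · obtain ⟨p, -⟩ := exists_walk_spine a0 b hd (i := 1) (j := d + 1) (by omega) (by omega)
    simpa [spine_one a0 b0 hd, spine_one a0 b hd] using p.reachable

lemma dist_le_max_pos (hl : 0 < l) (hm : 0 < m) (hd : 0 < d) (v u : Fin d ⊕ (Fin l ⊕ Fin m)) :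
    (Tlmd l m d).dist v u ≤ max (pos v) (d + 1 - pos v) := by
  have a0 : Fin l := ⟨0, hl⟩
  have b0 : Fin m := ⟨0, hm⟩
  have hleft : ∀ a : Fin l, (Tlmd l m d).Adj (.inl ⟨0, hd⟩) (.inr (.inl a)) := by
    simp [Tlmd]
  have hright : ∀ b : Fin m, (Tlmd l m d).Adj (.inl ⟨d - 1, by omega⟩) (.inr (.inr b)) := by
    simp [Tlmd]; omega
  -- two leaves on the same side have a common neighbour; all other pairs lie on a common spine
  rcases v with i | a | b <;> rcases u with j | a' | b'
  · have := dist_spine_le a0 b0 hd (i := i + 1) (j := j + 1) (by omega) (by omega)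
    simp only [spine_val_add_one] at this; simp only [pos]; omega
  · have := dist_spine_le a' b0 hd (i := i + 1) (j := 0) (by omega) (by omega)
    simp only [spine_val_add_one, spine_zero] at this; simp only [pos]; omega
  · have := dist_spine_le a0 b' hd (i := i + 1) (j := d + 1) (by omega) (by omega)
    simp only [spine_val_add_one, spine_add_one] at this; simp only [pos]; omega
  · have := dist_spine_le a b0 hd (i := 0) (j := j + 1) (by omega) (by omega)
    simp only [spine_val_add_one, spine_zero] at this; simp only [pos]; omega
  · have := dist_le (.cons (hleft a).symm (.cons (hleft a') .nil))
    simp only [Walk.length_cons, Walk.length_nil, pos] at this ⊢; omega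
  · have := dist_spine_le a b' hd (i := 0) (j := d + 1) (by omega) (by omega)
    simp only [spine_add_one, spine_zero] at this; simp only [pos]; omega
  · have := dist_spine_le a0 b hd (i := d + 1) (j := j + 1) (by omega) (by omega)
    simp only [spine_val_add_one, spine_add_one] at this; simp only [pos]; omega
  · have := dist_spine_le a' b hd (i := d + 1) (j := 0) (by omega) (by omega)
    simp only [spine_add_one, spine_zero] at this; simp only [pos]; omega
  · have := dist_le (.cons (hright b).symm (.cons (hright b') .nil))
    simp only [Walk.length_cons, Walk.length_nil, pos] at this ⊢; omega

lemma ecc_eq (hl : 0 < l) (hm : 0 < m) (hd : 0 < d) (v : Fin d ⊕ (Fin l ⊕ Fin m)) :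
    ecc (Tlmd l m d) v = max (pos v) (d + 1 - pos v) := by
  have hpos : ∀ ⦃p q⦄, (Tlmd l m d).Adj p q → pos q ≤ pos p + 1 :=
    fun _ _ => pos_le_add_one_of_adj
  have hconn := connected hl hm hd
  refine le_antisymm (ecc_le_of_forall_dist_le (dist_le_max_pos hl hm hd v)) (max_le ?_ ?_)
  · have := (hconn (.inr (.inl ⟨0, hl⟩)) v).apply_le_apply_add_dist pos hpos
    have := dist_le_ecc (G := Tlmd l m d) v (.inr (.inl ⟨0, hl⟩))
    rw [dist_comm] at this
    simp only [pos] at *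
    omega
  · have := (hconn v (.inr (.inr ⟨0, hm⟩))).apply_le_apply_add_dist pos hpos
    have := dist_le_ecc (G := Tlmd l m d) v (.inr (.inr ⟨0, hm⟩))
    simp only [pos] at *
    omega

lemma totalEcc_eq (hl : 0 < l) (hm : 0 < m) (hd : 0 < d) :
    totalEcc (Tlmd l m d) = ∑ i ∈ Finset.range d, max (i + 1) (d - i) + (l + m) * (d + 1) := by
  simp [totalEcc, Fintype.sum_sum_type, ecc_eq hl hm hd, pos,
    Fin.sum_univ_eq_sum_range (fun i => max (i + 1) (d - i))]
  ring

end Tlmd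

theorem totalEcc_Tlmd {l m d : ℕ} (hl : 0 < l) (hm : 0 < m) (hd : 0 < d) :
    totalEcc (Tlmd l m d) = eccBound (d + (l + m)) (l + m) := by
  have hS := four_mul_sum_range_max_sub (d + 1)
  rw [Finset.sum_range_succ', Finset.sum_range_succ] at hS
  simp only [Nat.add_sub_add_right] at hS
  rw [Tlmd.totalEcc_eq hl hm hd, eccBound]
  set k := l + m
  have e1 : (d + k) ^ 2 = d ^ 2 + 2 * (d * k) + k ^ 2 := by ring
  have e2 : 2 * (d + k) * k = 2 * (d * k) + 2 * k ^ 2 := by ring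
  have e3 : (d + 1) ^ 2 = d ^ 2 + 2 * d + 1 := by ring
  have e4 : k * (d + 1) = d * k + k := by ring
  omega

theorem stmt8_general {V : Type*} [Fintype V] (G : SimpleGraph V) (hG : G.Connected)
    (n k : ℕ) (hcard : Fintype.card V = n) (hk3 : k ≤ n - 3)
    (hpend : {v | IsPendant G v}.ncard = k) :
    totalEcc G ≤ (3 * n ^ 2 - k ^ 2 - 2 * n * k + 2 * (n + k)) / 4 ∧
    ∀ l, 1 ≤ l → l ≤ k - 1 →
      totalEcc (Tlmd l (k - l) (n - k)) = (3 * n ^ 2 - k ^ 2 - 2 * n * k + 2 * (n + k)) / 4 := by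
  refine ⟨hcard ▸ hpend ▸ hG.totalEcc_le, fun l hl hlk => ?_⟩
  have := totalEcc_Tlmd (l := l) (m := k - l) (d := n - k) (by omega) (by omega) (by omega)
  rwa [show l + (k - l) = k by omega, show n - k + k = n by omega] at this

theorem stmt8 {V : Type*} [Fintype V] (G : SimpleGraph V) (hG : G.Connected)
    (n k : ℕ) (hcard : Fintype.card V = n) (hk2 : 2 ≤ k) (hk3 : k ≤ n - 3)
    (hpend : {v | IsPendant G v}.ncard = k) :
    totalEcc G ≤ (3 * n ^ 2 - k ^ 2 - 2 * n * k + 2 * (n + k)) / 4 ∧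
    ∀ l, 1 ≤ l → l ≤ k - 1 →
      totalEcc (Tlmd l (k - l) (n - k)) = (3 * n ^ 2 - k ^ 2 - 2 * n * k + 2 * (n + k)) / 4 :=
  stmt8_general G hG n k hcard hk3 hpend
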